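/- arXiv:1505.04688 — 2 statements merged into one kernel-verified Lean document; each statement's English description precedes it below -/
import Mathlib

section
/- For all integers i, j ∈ ℤ: the monotone annihilation operator a_i is bounded on F_m with adjoint a_i† and ‖a_i‖ = ‖a_i†‖ = 1; if i ≥ j then a_i† a_j† = 0 and a_j a_i = 0; and if i ≠ j then a_i a_j† = 0. -/
open scoped InnerProductSpace ComplexOrder
open ContinuousLinearMap Filter

noncomputable section

/-- The monotone Fock space `F_m = ℓ²(Finset ℤ)`, the Hilbert space of square-summable
complex families indexed by the finite subsets of `ℤ`. -/
abbrev Fm : Type := lp (fun _ : Finset ℤ => ℂ) 2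

/-- The canonical orthonormal basis vector `e_A`, for `A` a finite subset of `ℤ`;
`e ∅` is the vacuum vector `Ω`. -/
noncomputable def e (A : Finset ℤ) : Fm := lp.single 2 A 1

/-- `adag` is the family of monotone creation operators: `adag i` sends `e A` to
`e (A ∪ {i})` if `A = ∅` or `i < min A` (equivalently, `i < j` for all `j ∈ A`),
and to `0` otherwise. -/
def CreatesOn (adag : ℤ → (Fm →L[ℂ] Fm)) : Prop :=
  ∀ (i : ℤ) (A : Finset ℤ),
    adag i (e A) = if ∀ j ∈ A, i < j then e (insert i A) else 0

/-- `a` is the family of monotone annihilation operators: `a i` sends `e A` to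
`e (A \ {i})` if `A ≠ ∅` and `i = min A` (equivalently, `i ∈ A` and `i ≤ j` for all
`j ∈ A`), and to `0` otherwise. -/
def AnnihilatesOn (a : ℤ → (Fm →L[ℂ] Fm)) : Prop :=
  ∀ (i : ℤ) (A : Finset ℤ),
    a i (e A) = if i ∈ A ∧ ∀ j ∈ A, i ≤ j then e (A.erase i) else 0

/-!
`a_i` and `a_i†` map basis vectors to basis vectors or to `0`, so `(a_i)† = a_i†` reduces to a
statement about finite sets: `i = min B` and `B \ {i} = A` iff `i < min A` and `B = A ∪ {i}`.
On the basis, `a_i a_j†` acts as the projection onto the span of the `e_A` with `i < min A` if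
`i = j`, and as `0` otherwise. The first is a nonzero orthogonal projection, hence has norm `1`,
and the C*-identity `‖x‖² = ‖x* x‖` gives `‖a_i†‖ = ‖a_i‖ = 1`. Finally `a_j a_i = 0` is the
adjoint of `a_i† a_j† = 0`.
-/

lemma inner_e_left (B : Finset ℤ) (v : Fm) : ⟪e B, v⟫_ℂ = v B := by
  simp [e, lp.inner_single_left]

lemma inner_e (A B : Finset ℤ) : ⟪e A, e B⟫_ℂ = if A = B then 1 else 0 := by
  rw [inner_e_left, e, lp.single_apply, Pi.single_apply]

lemma e_ne_zero (A : Finset ℤ) : e A ≠ 0 := fun h => by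
  simpa [h] using inner_e A A

lemma ext_inner_e {x y : Fm} (h : ∀ B, ⟪e B, x⟫_ℂ = ⟪e B, y⟫_ℂ) : x = y :=
  lp.ext <| funext fun B => by simpa only [inner_e_left] using h B

lemma ext_e {F : Type*} [AddCommMonoid F] [Module ℂ F] [TopologicalSpace F] [T2Space F]
    {T S : Fm →L[ℂ] F} (h : ∀ A, T (e A) = S (e A)) : T = S :=
  lp.ext_continuousLinearMap ENNReal.ofNat_ne_top fun A => ContinuousLinearMap.ext_ring (h A)

lemma adjoint_eq_of_inner_e {T S : Fm →L[ℂ] Fm}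
    (h : ∀ A B, ⟪T (e B), e A⟫_ℂ = ⟪e B, S (e A)⟫_ℂ) : adjoint T = S :=
  ext_e fun A => ext_inner_e fun B => by rw [adjoint_inner_right, h]

lemma IsStarProjection.norm_eq_one {E : Type*} [NonUnitalNormedRing E] [StarRing E] [CStarRing E]
    {p : E} (hp : IsStarProjection p) (h0 : p ≠ 0) : ‖p‖ = 1 := by
  have h := CStarRing.norm_star_mul_self (x := p)
  rw [hp.isSelfAdjoint.star_eq, hp.isIdempotentElem.eq] at h
  exact (mul_eq_left₀ (norm_ne_zero_iff.mpr h0)).mp h.symm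

lemma norm_eq_one_of_isStarProjection_star_mul_self {E : Type*} [NonUnitalNormedRing E]
    [StarRing E] [CStarRing E] {x : E} (hx : IsStarProjection (star x * x))
    (h0 : star x * x ≠ 0) : ‖x‖ = 1 := by
  have h := CStarRing.norm_star_mul_self (x := x)
  rw [hx.norm_eq_one h0] at h
  exact (mul_self_eq_one_iff.mp h.symm).resolve_right (by linarith [norm_nonneg x])

lemma isStarProjection_of_apply_e {P : Fm →L[ℂ] Fm} (hP : IsSelfAdjoint P) (p : Finset ℤ → Prop)
    [DecidablePred p] (h : ∀ A, P (e A) = if p A then e A else 0) : IsStarProjection P :=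
  ⟨ext_e fun A => by by_cases hA : p A <;> simp [mul_apply_eq_comp, h, hA], hP⟩

theorem Finset.min_mem_and_erase_eq_iff {α : Type*} [LinearOrder α] {i : α} {A B : Finset α} :
    ((i ∈ B ∧ ∀ k ∈ B, i ≤ k) ∧ B.erase i = A) ↔ ((∀ k ∈ A, i < k) ∧ B = insert i A) := by
  constructor
  · rintro ⟨⟨hiB, hmin⟩, rfl⟩
    exact ⟨fun k hk => (hmin k (mem_of_mem_erase hk)).lt_of_ne' (ne_of_mem_erase hk),
      (insert_erase hiB).symm⟩
  · rintro ⟨hlt, rfl⟩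
    refine ⟨⟨mem_insert_self i A, ?_⟩, erase_insert fun hi => (hlt i hi).false⟩
    simpa using fun k hk => (hlt k hk).le

variable {a adag : ℤ → (Fm →L[ℂ] Fm)}

theorem AnnihilatesOn.adjoint_eq (ha : AnnihilatesOn a) (hadag : CreatesOn adag) (i : ℤ) :
    adjoint (a i) = adag i := by
  refine adjoint_eq_of_inner_e fun A B => ?_
  have key := Finset.min_mem_and_erase_eq_iff (i := i) (A := A) (B := B)
  rw [ha, hadag]
  split_ifs <;> simp_all [inner_e]

theorem CreatesOn.mul_eq_zero_of_le (hadag : CreatesOn adag) {i j : ℤ} (hji : j ≤ i) :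
    adag i * adag j = 0 :=
  ext_e fun A => by
    rw [mul_apply_eq_comp, hadag j A]
    split_ifs
    · rw [hadag, if_neg fun h => (h j (Finset.mem_insert_self j A)).not_ge hji, zero_apply]
    · rw [map_zero, zero_apply]

theorem AnnihilatesOn.mul_apply_e (ha : AnnihilatesOn a) (hadag : CreatesOn adag) (i j : ℤ)
    (A : Finset ℤ) : (a i * adag j) (e A) = if i = j ∧ ∀ k ∈ A, j < k then e A else 0 := by
  rw [mul_apply_eq_comp, hadag j A]
  by_cases hA : ∀ k ∈ A, j < k
  · rw [if_pos hA, ha]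
    by_cases hij : i = j
    · subst hij
      have hiA : i ∉ A := fun h => (hA i h).false
      rw [if_pos ⟨Finset.mem_insert_self i A, Finset.forall_mem_insert .. |>.mpr
        ⟨le_rfl, fun k hk => (hA k hk).le⟩⟩, if_pos ⟨rfl, hA⟩, Finset.erase_insert hiA]
    · refine (if_neg ?_).trans (if_neg fun h => hij h.1).symm
      rintro ⟨hi, hmin⟩
      have := hmin j (Finset.mem_insert_self j A)
      have := hA i ((Finset.mem_insert.mp hi).resolve_left hij)
      omega
  · rw [if_neg hA, map_zero, if_neg fun h => hA h.2]

theorem AnnihilatesOn.star_creation (ha : AnnihilatesOn a) (hadag : CreatesOn adag) (i : ℤ) :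
    star (adag i) = a i := by
  rw [star_eq_adjoint, ← ha.adjoint_eq hadag, adjoint_adjoint]

theorem CreatesOn.norm_eq_one (hadag : CreatesOn adag) (ha : AnnihilatesOn a) (i : ℤ) :
    ‖adag i‖ = 1 := by
  have hstar := ha.star_creation hadag i
  have hP : IsStarProjection (star (adag i) * adag i) :=
    isStarProjection_of_apply_e (.star_mul_self _) _ fun A => by
      rw [hstar]; exact ha.mul_apply_e hadag i i A
  have hP0 : star (adag i) * adag i ≠ 0 := fun h => e_ne_zero ∅ <| by
    simpa [hstar, ha.mul_apply_e hadag] using congrArg (· (e ∅)) h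
  exact norm_eq_one_of_isStarProjection_star_mul_self hP hP0

/-- For all `i, j ∈ ℤ`: the monotone annihilator `a_i` is bounded (it is a continuous
linear map by construction) with adjoint `a_i†` and `‖a_i‖ = ‖a_i†‖ = 1`; if `i ≥ j`
then `a_i† a_j† = 0` and `a_j a_i = 0`; and if `i ≠ j` then `a_i a_j† = 0`. -/
theorem monotone_adjoint_norm_relations
    (a adag : ℤ → (Fm →L[ℂ] Fm))
    (ha : AnnihilatesOn a) (hadag : CreatesOn adag) (i j : ℤ) :
    ContinuousLinearMap.adjoint (a i) = adag i ∧
    ‖a i‖ = 1 ∧ ‖adag i‖ = 1 ∧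
    (i ≥ j → adag i * adag j = 0) ∧
    (i ≥ j → a j * a i = 0) ∧
    (i ≠ j → a i * adag j = 0) := by
  have hstar := ha.star_creation hadag
  refine ⟨ha.adjoint_eq hadag i, ?_, hadag.norm_eq_one ha i, hadag.mul_eq_zero_of_le,
    fun hji => ?_, fun hij => ext_e fun A => ?_⟩
  · rw [← hstar, star_eq_adjoint, LinearIsometryEquiv.norm_map, hadag.norm_eq_one ha]
  · rw [← hstar, ← hstar, ← star_mul, hadag.mul_eq_zero_of_le hji, star_zero]
  · rw [ha.mul_apply_e hadag, if_neg fun h => hij h.1, zero_apply]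

end
end

section
/- The monotone C*-dynamical system is not uniquely ergodic: for each i ∈ ℤ, (a) for every ξ ∈ F_m the Cesàro averages (1/n) ∑_{k=0}^{n−1} α^k(a_i a_i†) ξ converge to P_Ω ξ as n → ∞ (strong operator convergence of the averages to P_Ω), but (b) for every n ≥ 1 one has ‖(1/n) ∑_{k=0}^{n−1} α^k(a_i a_i†) − P_Ω‖ = 1 in operator norm, so the averages do not converge to P_Ω in norm. -/
open scoped InnerProductSpace ComplexOrder
open ContinuousLinearMap Filter

noncomputable section

/-- The orthogonal projection `P_Ω` of `F_m` onto `ℂΩ`. -/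
noncomputable def Pom : Fm →L[ℂ] Fm := (innerSL ℂ (e ∅)).smulRight (e ∅)

/-!
Every operator involved is diagonal in the basis `e A`: `a_j a_j†` fixes `e A` when `j < min A`
(or `A = ∅`) and kills it otherwise, so the `n`-th Cesàro average multiplies `e A` by the
proportion of `k < n` with `i + k < min A`. This weight is `1` for `A = ∅` and tends to `0`
otherwise, since at most `min A - i` values of `k` qualify; as the averages are contractions,
convergence on the basis gives strong convergence. In norm, the averages minus `P_Ω` are
diagonal with weights in `[0, 1]`, and they fix the unit vector `e {i + n}`, for which all `n`
values of `k` qualify.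
-/

open scoped ENNReal

namespace ContinuousLinearMap

variable {𝕜 E F ι : Type*} [NontriviallyNormedField 𝕜] [NormedAddCommGroup E] [NormedSpace 𝕜 E]
  [NormedAddCommGroup F] [NormedSpace 𝕜 F]

theorem tendsto_apply_of_dense_span {l : Filter ι} {T : ι → E →L[𝕜] F} {g : E →L[𝕜] F} {C : ℝ}
    (hT : ∀ j, ‖T j‖ ≤ C) {s : Set E} (hs : Dense (Submodule.span 𝕜 s : Set E))
    (h : ∀ x ∈ s, Tendsto (fun j => T j x) l (nhds (g x))) (x : E) :
    Tendsto (fun j => T j x) l (nhds (g x)) := by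
  let M : Submodule 𝕜 E :=
    { carrier := {x | Tendsto (fun j => T j x) l (nhds (g x))}
      zero_mem' := by simpa using tendsto_const_nhds
      add_mem' := fun hx hy => by simpa using hx.add hy
      smul_mem' := fun c x hx => by simpa using hx.const_smul c }
  have hequi : Equicontinuous ((↑) ∘ T : ι → E → F) :=
    ((NormedSpace.equicontinuous_TFAE T).out 5 1).1 (⟨C, hT⟩ : ∃ C, ∀ j, ‖T j‖ ≤ C)
  have hM : IsClosed (M : Set E) := hequi.isClosed_setOfPred_tendsto g.continuous
  exact closure_minimal (Submodule.span_le.2 h : Submodule.span 𝕜 s ≤ M) hM (hs x)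

end ContinuousLinearMap

namespace lp

variable {ι : Type*} [DecidableEq ι] {p : ℝ≥0∞} [Fact (1 ≤ p)]

theorem dense_span_single {𝕜 : Type*} [NormedField 𝕜] (hp : p ≠ ⊤) :
    Dense ((Submodule.span 𝕜 (Set.range fun a => lp.single p a (1 : 𝕜)) :
      Submodule 𝕜 (lp (fun _ : ι => 𝕜) p)) : Set (lp (fun _ : ι => 𝕜) p)) := by
  refine fun ξ => mem_closure_of_tendsto (lp.hasSum_single hp ξ) (Eventually.of_forall fun s => ?_)
  refine Submodule.sum_mem _ fun a _ => ?_
  rw [← mul_one (ξ a), ← smul_eq_mul, lp.single_smul]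
  exact Submodule.smul_mem _ _ (Submodule.subset_span ⟨a, rfl⟩)

theorem apply_eq_mul_of_map_single {𝕜 : Type*} [NormedField 𝕜] (hp : p ≠ ⊤)
    {T : lp (fun _ : ι => 𝕜) p →L[𝕜] lp (fun _ : ι => 𝕜) p} {d : ι → 𝕜}
    (hT : ∀ a, T (lp.single p a 1) = d a • lp.single p a 1) (ξ : lp (fun _ : ι => 𝕜) p) (a : ι) :
    T ξ a = d a * ξ a := by
  have hsum := ((lp.evalCLM 𝕜 (fun _ : ι => 𝕜) p a).comp T).hasSum (lp.hasSum_single hp ξ)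
  have hterm : ∀ b, (lp.evalCLM 𝕜 (fun _ : ι => 𝕜) p a).comp T (lp.single p b (ξ b)) =
      if b = a then d a * ξ a else 0 := by
    intro b
    rw [comp_apply, ← mul_one (ξ b), ← smul_eq_mul, lp.single_smul, map_smul, hT, smul_smul]
    rcases eq_or_ne b a with rfl | hba
    · simp [lp.evalCLM, mul_comm]
    · simp [lp.evalCLM, hba]
  rw [funext hterm] at hsum
  exact hsum.unique (hasSum_ite_eq a _)

theorem opNorm_le_of_map_single {𝕜 : Type*} [RCLike 𝕜] (hp : p ≠ ⊤)
    {T : lp (fun _ : ι => 𝕜) p →L[𝕜] lp (fun _ : ι => 𝕜) p} {d : ι → 𝕜}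
    (hT : ∀ a, T (lp.single p a 1) = d a • lp.single p a 1) {C : ℝ} (hC : 0 ≤ C)
    (hd : ∀ a, ‖d a‖ ≤ C) : ‖T‖ ≤ C := by
  refine T.opNorm_le_bound hC fun ξ => ?_
  calc ‖T ξ‖ ≤ ‖(C : 𝕜) • ξ‖ := lp.norm_mono (zero_lt_one.trans_le Fact.out).ne' fun a => by
          rw [apply_eq_mul_of_map_single hp hT, norm_mul, lp.coeFn_smul, Pi.smul_apply, norm_smul,
            RCLike.norm_of_nonneg hC]
          exact mul_le_mul_of_nonneg_right (hd a) (norm_nonneg _)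
    _ = C * ‖ξ‖ := by rw [norm_smul, RCLike.norm_of_nonneg hC]

end lp

open Finset

theorem norm_e (A : Finset ℤ) : ‖e A‖ = 1 := by
  simp [e, lp.norm_single (p := 2) (by norm_num)]

theorem Pom_apply_e (A : Finset ℤ) : Pom (e A) = (if A = ∅ then (1 : ℂ) else 0) • e A := by
  rcases eq_or_ne A ∅ with rfl | hA
  · simp [Pom, e]
  · simp [Pom, e, lp.inner_single_left, lp.single_apply, hA, Ne.symm hA]

theorem a_mul_adag_apply_e {a adag : ℤ → (Fm →L[ℂ] Fm)} (ha : AnnihilatesOn a)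
    (hadag : CreatesOn adag) (j : ℤ) (A : Finset ℤ) :
    (a j * adag j) (e A) = if ∀ x ∈ A, j < x then e A else 0 := by
  rw [mul_apply_eq_comp, hadag]
  split_ifs with h
  · have hjA : j ∉ A := fun hj => lt_irrefl j (h j hj)
    rw [ha, if_pos, erase_insert hjA]
    exact ⟨mem_insert_self j A, forall_mem_insert _ _ _ |>.2 ⟨le_rfl, fun x hx => (h x hx).le⟩⟩
  · exact map_zero _

def cesaroWeight (i : ℤ) (n : ℕ) (A : Finset ℤ) : ℂ :=
  (n : ℂ)⁻¹ * #((range n).filter fun k : ℕ => ∀ x ∈ A, i + (k : ℤ) < x)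

theorem cesaro_apply_e {a adag : ℤ → (Fm →L[ℂ] Fm)} (ha : AnnihilatesOn a)
    (hadag : CreatesOn adag) (i : ℤ) (n : ℕ) (A : Finset ℤ) :
    ((n : ℂ)⁻¹ • ∑ k ∈ range n, a (i + (k : ℤ)) * adag (i + (k : ℤ))) (e A) =
      cesaroWeight i n A • e A := by
  simp only [smul_apply, _root_.sum_apply, a_mul_adag_apply_e ha hadag,
    ← sum_filter, sum_const, ← Nat.cast_smul_eq_nsmul ℂ, smul_smul, cesaroWeight]

theorem norm_cesaroWeight_le_one (i : ℤ) (n : ℕ) (A : Finset ℤ) : ‖cesaroWeight i n A‖ ≤ 1 := by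
  rcases Nat.eq_zero_or_pos n with rfl | hn
  · simp [cesaroWeight]
  rw [cesaroWeight, norm_mul, norm_inv, Complex.norm_natCast, Complex.norm_natCast,
    inv_mul_le_one₀ (by exact_mod_cast hn)]
  exact_mod_cast (card_filter_le _ _).trans (card_range n).le

theorem cesaroWeight_eq_one {i : ℤ} {n : ℕ} (hn : 0 < n) {A : Finset ℤ}
    (hA : ∀ x ∈ A, i + n ≤ x) : cesaroWeight i n A = 1 := by
  rw [cesaroWeight, filter_true_of_mem, card_range, inv_mul_cancel₀ (by exact_mod_cast hn.ne')]
  intro k hk x hx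
  have : (k : ℤ) < n := by exact_mod_cast mem_range.1 hk
  linarith [hA x hx]

theorem tendsto_cesaroWeight (i : ℤ) (A : Finset ℤ) :
    Tendsto (fun n => cesaroWeight i n A) atTop (nhds (if A = ∅ then 1 else 0)) := by
  rcases A.eq_empty_or_nonempty with rfl | ⟨x, hx⟩
  · rw [if_pos rfl]
    exact tendsto_const_nhds.congr' <| (eventually_gt_atTop 0).mono fun n hn =>
      (cesaroWeight_eq_one hn (by simp)).symm
  rw [if_neg (ne_empty_of_mem hx)]
  have hcard : ∀ n, #((range n).filter fun k : ℕ => ∀ y ∈ A, i + (k : ℤ) < y) ≤ (x - i).toNat :=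
    fun n => (card_le_card fun k hk => mem_range.2 <| Int.lt_toNat.2 <| by
      linarith [(mem_filter.1 hk).2 x hx]).trans (card_range _).le
  refine squeeze_zero_norm (fun n => ?_)
    (by simpa using tendsto_one_div_atTop_nhds_zero_nat.const_mul ((x - i).toNat : ℝ))
  rw [cesaroWeight, norm_mul, norm_inv, Complex.norm_natCast, Complex.norm_natCast, mul_comm]
  gcongr
  exact_mod_cast hcard n

/-- The monotone C*-dynamical system is not uniquely ergodic. For each `i ∈ ℤ`
(recall `α^k(a_i a_i†) = a_{i+k} a_{i+k}†`):
(a) for every `ξ ∈ F_m` the Cesàro averages `(1/n) ∑_{k=0}^{n-1} α^k(a_i a_i†) ξ`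
converge to `P_Ω ξ` (strong operator convergence of the averages to `P_Ω`), but
(b) for every `n ≥ 1`, `‖(1/n) ∑_{k=0}^{n-1} α^k(a_i a_i†) − P_Ω‖ = 1` in operator
norm, so the averages do not converge to `P_Ω` in norm. -/
theorem monotone_not_uniquely_ergodic
    (a adag : ℤ → (Fm →L[ℂ] Fm))
    (ha : AnnihilatesOn a) (hadag : CreatesOn adag) (i : ℤ) :
    (∀ ξ : Fm, Tendsto
      (fun n : ℕ =>
        ((n : ℂ)⁻¹ • ∑ k ∈ Finset.range n, a (i + (k : ℤ)) * adag (i + (k : ℤ))) ξ)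
      atTop (nhds (Pom ξ))) ∧
    (∀ n : ℕ, 1 ≤ n →
      ‖(n : ℂ)⁻¹ • ∑ k ∈ Finset.range n, a (i + (k : ℤ)) * adag (i + (k : ℤ)) - Pom‖
        = 1) := by
  have hdiag := cesaro_apply_e ha hadag i
  have hdense : Dense (Submodule.span ℂ (Set.range e) : Set Fm) :=
    lp.dense_span_single ENNReal.ofNat_ne_top
  refine ⟨ContinuousLinearMap.tendsto_apply_of_dense_span (fun n =>
    lp.opNorm_le_of_map_single ENNReal.ofNat_ne_top (hdiag n) zero_le_one
      (norm_cesaroWeight_le_one i n)) hdense ?_, fun n hn => ?_⟩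
  · rintro _ ⟨A, rfl⟩
    simp only [hdiag, Pom_apply_e]
    exact (tendsto_cesaroWeight i A).smul_const (e A)
  set T := (n : ℂ)⁻¹ • ∑ k ∈ range n, a (i + (k : ℤ)) * adag (i + (k : ℤ)) - Pom with hT
  have hD : ∀ A, T (e A) = (if A = ∅ then 0 else cesaroWeight i n A) • e A := by
    intro A
    rw [hT, sub_apply, hdiag, Pom_apply_e, ← sub_smul]
    rcases eq_or_ne A ∅ with rfl | hA
    · simp [cesaroWeight_eq_one hn]
    · simp [hA]
  refine le_antisymm
    (lp.opNorm_le_of_map_single ENNReal.ofNat_ne_top hD zero_le_one fun A => ?_) ?_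
  · split_ifs
    exacts [by simp, norm_cesaroWeight_le_one i n A]
  have hfixed := hD {i + n}
  rw [if_neg (singleton_ne_empty _), cesaroWeight_eq_one hn (by simp), one_smul] at hfixed
  simpa [hfixed, norm_e] using T.le_opNorm (e {i + n})

end
end
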